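/- arXiv:2307.07899 — 4 statements merged into one kernel-verified Lean document; each statement's English description precedes it below -/
import Mathlib

section
/- For every tree plan Γ and every finite set X, the cardinality of Γ(X) equals P(Γ; |X|), where P(Γ; x) is the polynomial defined recursively by P(⟨⟩; x) = 1 and P(Γ; x) = 1 + Σ_{i<n} f_i(x)·P(Γ_{σ_i}; x), where σ₀,…,σ_{n-1} are the successors of the root, f_i(x) = 1 if λ(σ_i) = 1 and f_i(x) = x if λ(σ_i) = ∞, and Γ_σ = {τ : σ⌢τ ∈ Γ} with induced labeling. -/
/-- A tree plan: a finite set of nodes of `ω^{<ω}` together with a labeling,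
`lab σ = true` meaning `λ(σ) = ∞` and `lab σ = false` meaning `λ(σ) = 1`. -/
structure TreePlan where
  nodes : Finset (List ℕ)
  lab : List ℕ → Bool

/-- The conditions making the data of a `TreePlan` an actual tree plan:
it contains the root, is closed under predecessor, and the root is not an infinity-node. -/
def IsTreePlan (Γ : TreePlan) : Prop :=
  [] ∈ Γ.nodes ∧ (∀ σ ∈ Γ.nodes, σ.dropLast ∈ Γ.nodes) ∧ Γ.lab [] = false

/-- The projection `π` forgetting the second coordinates. -/
def piX {S : Type*} (a : List (ℕ × Option S)) : List ℕ := a.map Prod.fst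

/-- The tree `Γ(X)`, for `X` a set in an ambient type `S`.  Entries are pairs `(i, t)`
where `t = none` codes `★` (at nodes with `λ = 1`) and `t = some x` with `x ∈ X`
at infinity-nodes. -/
def GammaSet (Γ : TreePlan) {S : Type*} (X : Set S) : Set (List (ℕ × Option S)) :=
  {a | piX a ∈ Γ.nodes ∧ ∀ (k : ℕ) (hk : k < a.length),
    (Γ.lab ((piX a).take (k + 1)) = false → (a.get ⟨k, hk⟩).2 = none) ∧
    (Γ.lab ((piX a).take (k + 1)) = true → ∃ x ∈ X, (a.get ⟨k, hk⟩).2 = some x)}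

/-- `Γ(ω)`, realized with `X = ℕ`. -/
def GammaOmega (Γ : TreePlan) : Set (List (ℕ × Option ℕ)) :=
  GammaSet Γ (Set.univ : Set ℕ)

/-- `Γ(n) = Γ([n])` with `[n] = {0, …, n-1} ⊆ ℕ`. -/
def GammaN (Γ : TreePlan) (n : ℕ) : Set (List (ℕ × Option ℕ)) :=
  GammaSet Γ {k : ℕ | k < n}

/-- `↓B`, the downward closure of `B` in `Γ(X)` with respect to the
initial-segment order. -/
def downSet (Γ : TreePlan) {S : Type*} (X : Set S) (B : Set (List (ℕ × Option S))) :
    Set (List (ℕ × Option S)) :=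
  {a ∈ GammaSet Γ X | ∃ b ∈ B, a <+: b}

/-- The approximations to the tree closure. -/
def tclAux (Γ : TreePlan) {S : Type*} (X : Set S) (B : Set (List (ℕ × Option S))) :
    ℕ → Set (List (ℕ × Option S))
  | 0 => insert [] (downSet Γ X B)
  | n + 1 => tclAux Γ X B n ∪
      {a ∈ GammaSet Γ X | Γ.lab (piX a) = false ∧ a.dropLast ∈ tclAux Γ X B n}

/-- The tree closure `tcl(B)` of `B ⊆ Γ(X)`. -/
def tcl (Γ : TreePlan) {S : Type*} (X : Set S) (B : Set (List (ℕ × Option S))) :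
    Set (List (ℕ × Option S)) :=
  ⋃ n, tclAux Γ X B n

/-- Longest common prefix of two lists: the meet in the tree of sequences. -/
def lcp {α : Type*} [DecidableEq α] : List α → List α → List α
  | a :: as, b :: bs => if a = b then a :: lcp as bs else []
  | _, _ => []

/-- Embedding of `L_Γ`-structures between subsets `A`, `B` of trees of sequences:
an injection preserving the order (initial segment), the root, the predecessor,
the meet, and the predicates `P_σ` (i.e. the projection `π`). -/
structure IsGEmb (Γ : TreePlan) {S T : Type*} [DecidableEq S] [DecidableEq T]
    (A : Set (List (ℕ × Option S))) (B : Set (List (ℕ × Option T)))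
    (h : List (ℕ × Option S) → List (ℕ × Option T)) : Prop where
  maps : ∀ a ∈ A, h a ∈ B
  inj : ∀ a ∈ A, ∀ b ∈ A, h a = h b → a = b
  map_root : h [] = []
  map_le : ∀ a ∈ A, ∀ b ∈ A, (a <+: b ↔ h a <+: h b)
  map_pred : ∀ a ∈ A, h a.dropLast = (h a).dropLast
  map_meet : ∀ a ∈ A, ∀ b ∈ A, h (lcp a b) = lcp (h a) (h b)
  map_P : ∀ a ∈ A, piX (h a) = piX a

open Classical in
/-- `I(Γ, σ)`: the number of infinity-nodes `τ ∈ Γ` with `τ ≤ σ`. -/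
noncomputable def Icount (Γ : TreePlan) (σ : List ℕ) : ℕ :=
  (Γ.nodes.filter fun τ => Γ.lab τ = true ∧ τ <+: σ).card

open Classical in
/-- The relative tree plan `Γ_σ = {τ : σ⌢τ ∈ Γ}` with induced labeling. -/
noncomputable def TreePlan.sub (Γ : TreePlan) (σ : List ℕ) : TreePlan where
  nodes := (Γ.nodes.filter fun τ => σ <+: τ).image (List.drop σ.length)
  lab := fun τ => if τ = [] then false else Γ.lab (σ ++ τ)

open Classical in
/-- The successors of the root of `Γ`. -/
noncomputable def rootSuccs (Γ : TreePlan) : Finset ℕ :=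
  (Γ.nodes.filter fun σ => σ.length = 1).image fun σ => σ.headI

/-- `deg(Γ) = max {I(Γ,σ) : σ ∈ Γ}`. -/
noncomputable def degPlan (Γ : TreePlan) : ℕ := Γ.nodes.sup fun σ => Icount Γ σ

open Classical in
/-- `A(Γ)`: the number of nodes of `Γ` of maximal degree. -/
noncomputable def Acoef (Γ : TreePlan) : ℕ :=
  (Γ.nodes.filter fun σ => Icount Γ σ = degPlan Γ).card

section MyAux
variable {Γ : TreePlan}

lemma my_mem_of_prefix (hΓ : IsTreePlan Γ) :
    ∀ σ ∈ Γ.nodes, ∀ τ, τ <+: σ → τ ∈ Γ.nodes := by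
  intro σ
  induction σ using List.reverseRecOn with
  | nil => intro hσ τ hτ; rwa [List.prefix_nil.mp hτ]
  | append_singleton l x ih =>
    intro hσ τ hτ
    rcases List.prefix_concat_iff.mp hτ with h | h
    · rw [h]; exact hσ
    · exact ih (by simpa using hΓ.2.1 _ hσ) τ h

lemma my_mem_rootSuccs_iff {i : ℕ} : i ∈ rootSuccs Γ ↔ [i] ∈ Γ.nodes := by
  constructor
  · intro h
    simp only [rootSuccs, Finset.mem_image, Finset.mem_filter] at h
    obtain ⟨σ, ⟨hσ, hlen⟩, rfl⟩ := h
    match σ, hlen with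
    | [a], _ => simpa using hσ
  · intro h
    simp only [rootSuccs, Finset.mem_image, Finset.mem_filter]
    exact ⟨[i], ⟨h, rfl⟩, rfl⟩

lemma my_mem_sub_nodes {i : ℕ} {τ : List ℕ} : τ ∈ (Γ.sub [i]).nodes ↔ i :: τ ∈ Γ.nodes := by
  simp only [TreePlan.sub, Finset.mem_image, Finset.mem_filter]
  constructor
  · rintro ⟨σ, ⟨hσ, hpre⟩, rfl⟩
    obtain ⟨r, rfl⟩ := hpre
    simpa using hσ
  · intro h
    exact ⟨i :: τ, ⟨h, ⟨τ, rfl⟩⟩, by simp⟩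

lemma my_sub_lab {i : ℕ} {τ : List ℕ} (hτ : τ ≠ []) : (Γ.sub [i]).lab τ = Γ.lab (i :: τ) := by
  simp [TreePlan.sub, hτ]

lemma my_isTreePlan_sub (hΓ : IsTreePlan Γ) {i : ℕ} (hi : [i] ∈ Γ.nodes) :
    IsTreePlan (Γ.sub [i]) := by
  refine ⟨?_, ?_, by simp [TreePlan.sub]⟩
  · rw [my_mem_sub_nodes]; exact hi
  · intro τ hτ
    rw [my_mem_sub_nodes] at hτ ⊢
    cases τ with
    | nil => simpa using hi
    | cons a l =>
      have := hΓ.2.1 _ hτ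
      simpa [List.dropLast] using this

lemma my_sub_card_lt (hΓ : IsTreePlan Γ) {i : ℕ} (hi : [i] ∈ Γ.nodes) :
    (Γ.sub [i]).nodes.card < Γ.nodes.card := by
  classical
  have h1 : (Γ.sub [i]).nodes.card ≤
      (Γ.nodes.filter fun τ => [i] <+: τ).card := by
    simp only [TreePlan.sub]
    exact Finset.card_image_le.trans (le_of_eq (by congr 1))
  refine h1.trans_lt (Finset.card_lt_card (Finset.filter_ssubset.mpr ⟨[], hΓ.1, by simp⟩))
end MyAux

lemma my_nil_mem_gammaSet {Γ : TreePlan} (hΓ : IsTreePlan Γ) {S : Type*} (X : Set S) :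
    [] ∈ GammaSet Γ X := by
  refine ⟨by simpa [piX] using hΓ.1, ?_⟩
  intro k hk
  simp at hk

lemma my_cons_mem_gammaSet_iff {Γ : TreePlan} (hΓ : IsTreePlan Γ) {S : Type*}
    {i : ℕ} {t : Option S} {b : List (ℕ × Option S)} :
    (i, t) :: b ∈ GammaSet Γ (Set.univ : Set S) ↔
      [i] ∈ Γ.nodes ∧
      ((Γ.lab [i] = false → t = none) ∧ (Γ.lab [i] = true → ∃ x, t = some x)) ∧
      b ∈ GammaSet (Γ.sub [i]) (Set.univ : Set S) := by
  have hpi : piX ((i, t) :: b) = i :: piX b := by simp [piX]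
  constructor
  · rintro ⟨hmem, hcond⟩
    rw [hpi] at hmem
    have hi : [i] ∈ Γ.nodes := my_mem_of_prefix hΓ _ hmem [i] ⟨piX b, rfl⟩
    refine ⟨hi, ?_, ?_, ?_⟩
    · have h0 := hcond 0 (by simp)
      simpa [hpi] using h0
    · rw [my_mem_sub_nodes]; exact hmem
    · intro k hk
      have hlen : k + 1 < ((i, t) :: b).length := by simpa using Nat.succ_lt_succ hk
      have h := hcond (k + 1) hlen
      have hblen : (piX b).length = b.length := by simp [piX]
      have hne : (piX b).take (k + 1) ≠ [] := by
        intro hc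
        rcases List.take_eq_nil_iff.mp hc with h' | h'
        · omega
        · rw [h'] at hblen; simp at hblen; omega
      have htake : (piX ((i, t) :: b)).take (k + 1 + 1) = i :: (piX b).take (k + 1) := by
        rw [hpi]; rfl
      have hget : (((i, t) :: b).get ⟨k + 1, hlen⟩) = b.get ⟨k, hk⟩ := rfl
      rw [htake, hget] at h
      rw [my_sub_lab hne]
      exact h
  · rintro ⟨hi, hok, hbmem, hbcond⟩
    rw [my_mem_sub_nodes] at hbmem
    refine ⟨by rwa [hpi], ?_⟩
    intro k hk
    match k with
    | 0 =>
      have : (piX ((i, t) :: b)).take 1 = [i] := by rw [hpi]; rfl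
      rw [this]
      simpa using hok
    | k + 1 =>
      have hk' : k < b.length := by simpa using hk
      have h := hbcond k hk'
      have hblen : (piX b).length = b.length := by simp [piX]
      have hne : (piX b).take (k + 1) ≠ [] := by
        intro hc
        rcases List.take_eq_nil_iff.mp hc with h' | h'
        · omega
        · rw [h'] at hblen; simp at hblen; omega
      have htake : (piX ((i, t) :: b)).take (k + 1 + 1) = i :: (piX b).take (k + 1) := by
        rw [hpi]; rfl
      have hget : (((i, t) :: b).get ⟨k + 1, hk⟩) = b.get ⟨k, hk'⟩ := rfl
      rw [htake, hget]
      rw [my_sub_lab hne] at h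
      exact h

lemma my_card_OK {X : Type*} [Fintype X] (c : Bool) :
    Nat.card {t : Option X // (c = false → t = none) ∧ (c = true → ∃ x, t = some x)} =
      if c = true then Fintype.card X else 1 := by
  cases c with
  | false =>
    rw [if_neg (by simp)]
    haveI : Unique {t : Option X // (false = false → t = none) ∧ (false = true → ∃ x, t = some x)} :=
      ⟨⟨⟨none, by simp⟩⟩, fun t => Subtype.ext (t.2.1 rfl)⟩
    exact Nat.card_unique
  | true =>
    rw [if_pos rfl]
    have e : X ≃ {t : Option X // (true = false → t = none) ∧ (true = true → ∃ x, t = some x)} := by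
      refine Equiv.ofBijective (fun x => ⟨some x, by simp⟩) ⟨?_, ?_⟩
      · intro a b h
        have h' := congrArg Subtype.val h
        simpa using h'
      · rintro ⟨t, h1, h2⟩
        obtain ⟨x, rfl⟩ := h2 rfl
        exact ⟨x, rfl⟩
    rw [← Nat.card_congr e, Nat.card_eq_fintype_card]

lemma my_finite_option {α : Type*} [Finite α] : Finite (Option α) :=
  Finite.of_equiv (α ⊕ (PUnit : Type)) (Equiv.optionEquivSumPUnit α).symm

lemma my_card_option {α : Type*} [Finite α] : Nat.card (Option α) = Nat.card α + 1 := by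
  have e : Option α ≃ α ⊕ (PUnit : Type) := Equiv.optionEquivSumPUnit α
  rw [Nat.card_congr e, Nat.card_sum,
    show Nat.card (PUnit : Type) = 1 from Nat.card_unique]

lemma my_card_sigma {ι : Type*} [Fintype ι] {f : ι → Type*} [∀ i, Finite (f i)] :
    Nat.card (Σ i, f i) = ∑ i, Nat.card (f i) := by
  haveI : ∀ i, Fintype (f i) := fun i => Fintype.ofFinite _
  rw [Nat.card_eq_fintype_card, Fintype.card_sigma]
  exact Finset.sum_congr rfl fun i _ => (Nat.card_eq_fintype_card).symm


/-- For every tree plan `Γ` and finite set `X`, `|Γ(X)| = P(Γ; |X|)`, where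
`P` is the polynomial counting function defined by the recursion
`P(Γ; x) = 1 + Σ_{i < n} f_i(x) · P(Γ_{σ_i}; x)` over the successors
`σ_0, …, σ_{n-1}` of the root, with `f_i(x) = x` if `λ(σ_i) = ∞` and
`f_i(x) = 1` otherwise (so in particular `P(⟨⟩; x) = 1`). -/
theorem card_gammaSet_eq_poly (Γ : TreePlan) (hΓ : IsTreePlan Γ)
    (P : TreePlan → ℕ → ℕ)
    (hP : ∀ Δ : TreePlan, IsTreePlan Δ → ∀ x : ℕ,
      P Δ x = 1 + ∑ i ∈ rootSuccs Δ,
        (if Δ.lab [i] = true then x else 1) * P (Δ.sub [i]) x)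
    {X : Type*} [Fintype X] :
    Nat.card (GammaSet Γ (Set.univ : Set X)) = P Γ (Fintype.card X) := by
  classical
  suffices H : ∀ n (Δ : TreePlan), Δ.nodes.card ≤ n → IsTreePlan Δ →
      (GammaSet Δ (Set.univ : Set X)).Finite ∧
        Nat.card (GammaSet Δ (Set.univ : Set X)) = P Δ (Fintype.card X) by
    exact (H Γ.nodes.card Γ le_rfl hΓ).2
  intro n
  induction n with
  | zero =>
    intro Δ hcard hΔ
    exact absurd (Finset.card_pos.mpr ⟨[], hΔ.1⟩) (by omega)
  | succ n ih =>
    intro Δ hcard hΔ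
    have subIH : ∀ i, [i] ∈ Δ.nodes →
        (GammaSet (Δ.sub [i]) (Set.univ : Set X)).Finite ∧
          Nat.card (GammaSet (Δ.sub [i]) (Set.univ : Set X)) =
            P (Δ.sub [i]) (Fintype.card X) := by
      intro i hi
      exact ih _ (by have := my_sub_card_lt hΔ hi; omega) (my_isTreePlan_sub hΔ hi)
    set T := (Σ i : rootSuccs Δ,
      {t : Option X // (Δ.lab [i.1] = false → t = none) ∧
          (Δ.lab [i.1] = true → ∃ x, t = some x)} ×
        (GammaSet (Δ.sub [i.1]) (Set.univ : Set X))) with hT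
    let F : Option T → (GammaSet Δ (Set.univ : Set X)) := fun o =>
      match o with
      | none => ⟨[], my_nil_mem_gammaSet hΔ _⟩
      | some ⟨i, t, b⟩ => ⟨(i.1, t.1) :: b.1,
          (my_cons_mem_gammaSet_iff hΔ).2 ⟨my_mem_rootSuccs_iff.mp i.2, t.2, b.2⟩⟩
    have hbij : Function.Bijective F := by
      constructor
      · rintro (_ | ⟨i1, t1, b1⟩) (_ | ⟨i2, t2, b2⟩) h
        · rfl
        · exact absurd (congrArg Subtype.val h) (by simp [F])
        · exact absurd (congrArg Subtype.val h) (by simp [F])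
        · have h' := congrArg Subtype.val h
          simp only [F, List.cons.injEq, Prod.mk.injEq] at h'
          obtain ⟨⟨hi, ht⟩, hb⟩ := h'
          obtain ⟨i1, hi1⟩ := i1
          obtain ⟨i2, hi2⟩ := i2
          cases hi
          obtain rfl : t1 = t2 := Subtype.ext ht
          obtain rfl : b1 = b2 := Subtype.ext hb
          rfl
      · rintro ⟨a, ha⟩
        match a, ha with
        | [], _ => exact ⟨none, rfl⟩
        | (i, t) :: b, ha =>
          obtain ⟨hi, hok, hb⟩ := (my_cons_mem_gammaSet_iff hΔ).1 ha
          exact ⟨some ⟨⟨i, my_mem_rootSuccs_iff.2 hi⟩, ⟨t, hok⟩, ⟨b, hb⟩⟩, rfl⟩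
    haveI hfin : ∀ i : rootSuccs Δ,
        Finite (GammaSet (Δ.sub [i.1]) (Set.univ : Set X)) := fun i =>
      (subIH i.1 (my_mem_rootSuccs_iff.mp i.2)).1.to_subtype
    haveI : Finite T := by rw [hT]; infer_instance
    haveI : Finite (Option T) := my_finite_option
    haveI : Finite (GammaSet Δ (Set.univ : Set X)) :=
      Finite.of_equiv _ (Equiv.ofBijective F hbij)
    refine ⟨Set.finite_coe_iff.mp inferInstance, ?_⟩
    have hcardeq : Nat.card (GammaSet Δ (Set.univ : Set X)) = Nat.card (Option T) :=
      (Nat.card_congr (Equiv.ofBijective F hbij)).symm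
    haveI hfin2 : ∀ i : rootSuccs Δ, Finite
        ({t : Option X // (Δ.lab [i.1] = false → t = none) ∧
            (Δ.lab [i.1] = true → ∃ x, t = some x)} ×
          (GammaSet (Δ.sub [i.1]) (Set.univ : Set X))) := fun i => inferInstance
    rw [hcardeq, my_card_option, hT, my_card_sigma, hP Δ hΔ (Fintype.card X), add_comm]
    congr 1
    rw [← Finset.sum_coe_sort (rootSuccs Δ)]
    apply Finset.sum_congr rfl
    intro i _
    rw [Nat.card_prod, my_card_OK, (subIH i.1 (my_mem_rootSuccs_iff.mp i.2)).2]
end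

section
/- For every tree plan Γ, node σ ∈ Γ, and finite set X, the number of elements a ∈ Γ(X) with π_X(a) = σ equals |X|^{I(Γ,σ)}, where I(Γ,σ) is the number of infinity-nodes τ ∈ Γ with τ ≤ σ. -/
lemma TreePlan.take_mem (Γ : TreePlan) (hΓ : IsTreePlan Γ) (σ : List ℕ) (hσ : σ ∈ Γ.nodes) :
    ∀ m, σ.take m ∈ Γ.nodes := by
  have key : ∀ j, σ.take (σ.length - j) ∈ Γ.nodes := by
    intro j
    induction j with
    | zero => simpa using hσ
    | succ j ih =>
      rcases le_or_gt σ.length j with h | h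
      · have : σ.length - (j+1) = σ.length - j := by omega
        rw [this]; exact ih
      · have heq : σ.take (σ.length - (j+1)) = (σ.take (σ.length - j)).dropLast := by
          rw [List.dropLast_eq_take, List.take_take, List.length_take]
          congr 1; omega
        rw [heq]; exact hΓ.2.1 _ ih
  intro m
  rcases le_or_gt σ.length m with h | h
  · rw [List.take_of_length_le h]; exact hσ
  · have := key (σ.length - m)
    rwa [Nat.sub_sub_self h.le] at this

open Classical in
lemma Icount_eq_card_filter (Γ : TreePlan) (hΓ : IsTreePlan Γ) (σ : List ℕ)
    (hσ : σ ∈ Γ.nodes) :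
    ((Finset.univ : Finset (Fin σ.length)).filter
        fun k => Γ.lab (σ.take (k.1+1)) = true).card = Icount Γ σ := by
  apply Finset.card_bij (fun k _ => σ.take (k.1 + 1))
  · intro k hk
    simp only [Finset.mem_filter, Finset.mem_univ, true_and, Icount] at hk ⊢
    exact ⟨Γ.take_mem hΓ σ hσ _, hk, List.take_prefix _ _⟩
  · intro a ha b hb hab
    have : min (a.1+1) σ.length = min (b.1+1) σ.length := by
      have := congrArg List.length hab
      simpa using this
    have : a.1 = b.1 := by omega
    exact Fin.ext this
  · intro τ hτ
    simp only [Icount, Finset.mem_filter] at hτ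
    obtain ⟨hmem, hlab, hpre⟩ := hτ
    have hne : τ ≠ [] := by
      rintro rfl; rw [hΓ.2.2] at hlab; simp at hlab
    have hlen : τ.length ≤ σ.length := hpre.length_le
    have hpos : 0 < τ.length := List.length_pos_iff.mpr hne
    refine ⟨⟨τ.length - 1, by omega⟩, ?_, ?_⟩
    · simp only [Finset.mem_filter, Finset.mem_univ, true_and]
      have h1 : τ.length - 1 + 1 = τ.length := by omega
      rw [h1, (List.prefix_iff_eq_take.mp hpre).symm]
      exact hlab
    · have h1 : τ.length - 1 + 1 = τ.length := by omega
      rw [h1]; exact (List.prefix_iff_eq_take.mp hpre).symm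

/-- For every tree plan `Γ`, node `σ ∈ Γ`, and finite set `X`, the number of
`a ∈ Γ(X)` with `π_X(a) = σ` equals `|X|^{I(Γ,σ)}`, where `I(Γ,σ)` is the number
of infinity-nodes `τ ∈ Γ` with `τ ≤ σ`. -/
theorem card_fiber_eq_pow (Γ : TreePlan) (hΓ : IsTreePlan Γ)
    (σ : List ℕ) (hσ : σ ∈ Γ.nodes) {X : Type*} [Fintype X] :
    Nat.card {a : List (ℕ × Option X) //
        a ∈ GammaSet Γ (Set.univ : Set X) ∧ piX a = σ} =
      Fintype.card X ^ Icount Γ σ := by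
  classical
  have hpiofn : ∀ f : Fin σ.length → Option X,
      piX (List.ofFn fun k => (σ.get k, f k)) = σ := by
    intro f
    simp [piX, List.map_ofFn, Function.comp_def, List.ofFn_get]
  have e1 : {a : List (ℕ × Option X) //
        a ∈ GammaSet Γ (Set.univ : Set X) ∧ piX a = σ} ≃
      {f : Fin σ.length → Option X // ∀ k, (f k).isSome = Γ.lab (σ.take (k.1+1))} := by
    have hlen : ∀ a : {a : List (ℕ × Option X) //
        a ∈ GammaSet Γ (Set.univ : Set X) ∧ piX a = σ}, a.1.length = σ.length := by
      intro a
      have := congrArg List.length a.2.2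
      simpa [piX] using this
    refine
      { toFun := fun a => ⟨fun k => (a.1.get ⟨k.1, by have := hlen a; omega⟩).2, ?_⟩
        invFun := fun f => ⟨List.ofFn (fun k : Fin σ.length => (σ.get k, f.1 k)), ?_⟩
        left_inv := ?_
        right_inv := ?_ }
    · rintro ⟨k, hk⟩
      obtain ⟨⟨hmem, hcond⟩, hpi⟩ := a.2
      have hk' : k < a.1.length := by have := hlen a; omega
      obtain ⟨h0, h1⟩ := hcond k hk'
      rw [hpi] at h0 h1
      show ((a.1.get ⟨k, hk'⟩).2).isSome = Γ.lab (σ.take (k+1))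
      cases hb : Γ.lab (σ.take (k+1)) with
      | false => rw [h0 hb]; rfl
      | true =>
        obtain ⟨x, -, hx⟩ := h1 hb
        rw [hx]; rfl
    · refine ⟨⟨?_, ?_⟩, hpiofn f.1⟩
      · rw [hpiofn f.1]; exact hσ
      · intro k hk
        have hk' : k < σ.length := by simpa using hk
        have hget : ((List.ofFn fun k : Fin σ.length => (σ.get k, f.1 k)).get ⟨k, hk⟩) =
            (σ.get ⟨k, hk'⟩, f.1 ⟨k, hk'⟩) := by
          simp [List.get_ofFn]
        rw [hpiofn f.1, hget]
        have hs := f.2 ⟨k, hk'⟩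
        constructor
        · intro hb; rw [hb] at hs
          exact Option.not_isSome_iff_eq_none.mp (by simp [hs])
        · intro hb; rw [hb] at hs
          obtain ⟨x, hx⟩ := Option.isSome_iff_exists.mp hs
          exact ⟨x, Set.mem_univ x, hx⟩
    · intro a
      apply Subtype.ext
      have hl := hlen a
      have hpi := a.2.2
      apply List.ext_get (by simpa using hl.symm)
      intro i h1 h2
      have hi : i < σ.length := by simpa using h1
      rw [List.get_ofFn]
      refine Prod.ext ?_ rfl
      show σ.get ⟨i, hi⟩ = (a.1.get ⟨i, h2⟩).1
      simp only [List.get_eq_getElem]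
      rw [List.getElem_of_eq hpi.symm hi]
      simp [piX]
    · rintro ⟨f, hf⟩
      apply Subtype.ext
      funext k
      show ((List.ofFn fun k : Fin σ.length => (σ.get k, f k)).get ⟨k.1, _⟩).2 = f k
      simp [List.get_ofFn]
  rw [Nat.card_congr e1, Nat.card_congr (Equiv.subtypePiEquivPi
    (p := fun (k : Fin σ.length) (o : Option X) => o.isSome = Γ.lab (σ.take (k.1+1)))),
    Nat.card_pi]
  have hcard : ∀ k : Fin σ.length,
      Nat.card {o : Option X // o.isSome = Γ.lab (σ.take (k.1+1))} =
        if Γ.lab (σ.take (k.1+1)) = true then Fintype.card X else 1 := by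
    intro k
    cases hb : Γ.lab (σ.take (k.1+1)) with
    | false =>
      rw [if_neg (by simp)]
      have e : {o : Option X // o.isSome = false} ≃ PUnit.{1} :=
        { toFun := fun _ => PUnit.unit
          invFun := fun _ => ⟨none, rfl⟩
          left_inv := by
            rintro ⟨o, ho⟩
            have : o = none := Option.not_isSome_iff_eq_none.mp (by simp [ho])
            simp [this]
          right_inv := fun _ => rfl }
      rw [Nat.card_congr e]; simp
    | true =>
      rw [if_pos rfl]
      have e : {o : Option X // o.isSome = true} ≃ X :=
        { toFun := fun o => o.1.get o.2
          invFun := fun x => ⟨some x, rfl⟩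
          left_inv := by
            rintro ⟨o, ho⟩
            cases o with
            | none => simp at ho
            | some x => rfl
          right_inv := fun x => rfl }
      rw [Nat.card_congr e, Nat.card_eq_fintype_card]
  simp_rw [hcard]
  rw [Finset.prod_ite, Finset.prod_const, Finset.prod_const, one_pow, mul_one,
    Icount_eq_card_filter Γ hΓ σ hσ]
end

section
/- Let Γ be a tree plan and σ ⊆ σ' ∈ Γ with deg(σ'/σ) > 0, where deg(σ'/σ) is the number of infinity-nodes τ with σ < τ ≤ σ'. Let δ = deg(σ'/σ)/deg(Γ) where deg(Γ) = max_σ I(Γ,σ). Then along finite sets X with |X| → ∞, the ratio |{a ∈ Γ(X) : π(a) = σ', b < a}| / |Γ(X)|^δ converges to A(Γ)^{-δ}, where A(Γ) is the number of nodes of Γ of maximal degree, for any fixed b with π(b) = σ. -/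
/-! An element of `Γ(X)` above `b` with projection `σ'` is `b` followed by one entry for each
node strictly between `σ` and `σ'`: an element of `X` at an infinity-node and `★` elsewhere.
Hence that fibre has exactly `|X| ^ deg(σ'/σ)` elements, and summing these counts over all
nodes (with `b = []`) gives `|Γ(X)| = ∑_τ |X| ^ I(Γ,τ)`, a polynomial in `|X|` of degree
`deg Γ` whose leading coefficient is `A(Γ)`. As the numerator is `(|X| ^ deg Γ) ^ δ`, the
ratio is `(|X| ^ deg Γ / |Γ(X)|) ^ δ → A(Γ) ^ (-δ)`. -/

open Filter Topology

section TreeOfSequences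

variable {S : Type*} {Γ : TreePlan}

theorem IsTreePlan.mem_of_prefix (hΓ : IsTreePlan Γ) {ρ τ : List ℕ} (hτ : τ ∈ Γ.nodes)
    (hρ : ρ <+: τ) : ρ ∈ Γ.nodes := by
  induction τ using List.reverseRecOn with
  | nil => rwa [List.prefix_nil.1 hρ]
  | append_singleton τ i ih =>
    rcases List.prefix_concat_iff.1 hρ with rfl | hρ
    · exact hτ
    · exact ih (by simpa using hΓ.2.1 _ hτ) hρ

def slot (X : Set S) (l : Bool) : Set (Option S) :=
  if l then Option.some '' X else {none}

theorem mem_slot_iff {X : Set S} {l : Bool} {t : Option S} :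
    t ∈ slot X l ↔ (l = false → t = none) ∧ (l = true → ∃ x ∈ X, t = some x) := by
  cases l <;> simp [slot, eq_comm]

theorem encard_slot (X : Set S) (l : Bool) : (slot X l).encard = X.encard ^ l.toNat := by
  cases l <;> simp [slot, (Option.some_injective S).encard_image]

theorem piX_append_singleton (a : List (ℕ × Option S)) (p : ℕ × Option S) :
    piX (a ++ [p]) = piX a ++ [p.1] := by
  simp [piX]

theorem length_piX (a : List (ℕ × Option S)) : (piX a).length = a.length :=
  List.length_map _

theorem mem_GammaSet_iff {X : Set S} {a : List (ℕ × Option S)} :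
    a ∈ GammaSet Γ X ↔ piX a ∈ Γ.nodes ∧
      ∀ c p, c ++ [p] <+: a → p.2 ∈ slot X (Γ.lab (piX c ++ [p.1])) := by
  have hpiX_take : ∀ k, (piX a).take k = piX (a.take k) := fun k => (List.map_take ..).symm
  refine and_congr_right fun _ => ⟨fun h c p hcp => ?_, fun h k hk => ?_⟩
  · obtain ⟨e, rfl⟩ := hcp
    have hk : c.length < (c ++ [p] ++ e).length := by simp
    have htake : (c ++ [p] ++ e).take (c.length + 1) = c ++ [p] := List.take_left' (by simp)
    have hp := h c.length hk
    rw [hpiX_take, htake] at hp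
    simpa [mem_slot_iff, piX] using hp
  · have hpre : a.take k ++ [a[k]] <+: a := by
      rw [List.take_append_getElem]; exact List.take_prefix _ _
    have hp := h _ _ hpre
    rw [hpiX_take, ← List.take_append_getElem hk]
    simpa only [mem_slot_iff, piX, List.map_append, List.map_cons, List.map_nil,
      List.get_eq_getElem] using hp

theorem append_singleton_mem_GammaSet_iff (hΓ : IsTreePlan Γ) {X : Set S}
    {a : List (ℕ × Option S)} {p : ℕ × Option S} :
    a ++ [p] ∈ GammaSet Γ X ↔
      a ∈ GammaSet Γ X ∧ piX a ++ [p.1] ∈ Γ.nodes ∧ p.2 ∈ slot X (Γ.lab (piX a ++ [p.1])) := by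
  simp only [mem_GammaSet_iff, piX_append_singleton]
  constructor
  · rintro ⟨hnode, h⟩
    exact ⟨⟨hΓ.mem_of_prefix hnode (List.prefix_append _ _),
      fun c q hcq => h c q (hcq.trans (List.prefix_append _ _))⟩, hnode, h a p (List.prefix_refl _)⟩
  · rintro ⟨⟨-, h⟩, hnode, hp⟩
    refine ⟨hnode, fun c q hcq => ?_⟩
    rcases List.prefix_concat_iff.1 hcq with hcq | hcq
    · obtain ⟨rfl, hqp⟩ := List.append_inj' hcq rfl
      rwa [List.singleton_inj.1 hqp]
    · exact h c q hcq

theorem slot_mono {X Y : Set S} (hXY : X ⊆ Y) (l : Bool) : slot X l ⊆ slot Y l := by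
  cases l
  · exact subset_rfl
  · exact Set.image_mono hXY

theorem GammaSet_mono {X Y : Set S} (hXY : X ⊆ Y) : GammaSet Γ X ⊆ GammaSet Γ Y := by
  simp only [Set.subset_def, mem_GammaSet_iff]
  exact fun a ⟨hnode, h⟩ => ⟨hnode, fun c p hcp => slot_mono hXY _ (h c p hcp)⟩

def fiberAbove (Γ : TreePlan) (X : Set S) (b : List (ℕ × Option S)) (τ : List ℕ) :
    Set (List (ℕ × Option S)) :=
  {a | a ∈ GammaSet Γ X ∧ piX a = τ ∧ b <+: a}

theorem fiberAbove_piX_self {X : Set S} {b : List (ℕ × Option S)} (hb : b ∈ GammaSet Γ X) :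
    fiberAbove Γ X b (piX b) = {b} := by
  ext a
  refine ⟨fun ⟨_, hπ, hba⟩ => (hba.eq_of_length ?_).symm, fun ha => ?_⟩
  · rw [← length_piX, ← length_piX, hπ]
  · rw [Set.mem_singleton_iff.1 ha]
    exact ⟨hb, rfl, List.prefix_refl _⟩

theorem fiberAbove_append_singleton (hΓ : IsTreePlan Γ) {X : Set S} {b : List (ℕ × Option S)}
    {τ : List ℕ} {i : ℕ} (hτi : τ ++ [i] ∈ Γ.nodes) (hbτ : b.length ≤ τ.length) :
    fiberAbove Γ X b (τ ++ [i]) =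
      (fun q => q.1 ++ [(i, q.2)]) '' (fiberAbove Γ X b τ ×ˢ slot X (Γ.lab (τ ++ [i]))) := by
  ext a
  constructor
  · rintro ⟨ha, hπ, hba⟩
    obtain rfl | ⟨c, p, rfl⟩ := List.eq_nil_or_concat a
    · simp [piX] at hπ
    rw [List.concat_eq_append] at ha hπ hba ⊢
    rw [piX_append_singleton] at hπ
    obtain ⟨rfl, hpi⟩ := List.append_inj' hπ rfl
    obtain rfl : p.1 = i := List.singleton_inj.1 hpi
    rw [append_singleton_mem_GammaSet_iff hΓ] at ha
    have hbc : b <+: c := by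
      rcases List.prefix_concat_iff.1 hba with rfl | hbc
      · simp [length_piX] at hbτ
      · exact hbc
    exact ⟨(c, p.2), ⟨⟨ha.1, rfl, hbc⟩, ha.2.2⟩, rfl⟩
  · rintro ⟨⟨c, t⟩, ⟨⟨hc, rfl, hbc⟩, ht⟩, rfl⟩
    exact ⟨(append_singleton_mem_GammaSet_iff hΓ).2 ⟨hc, hτi, ht⟩, piX_append_singleton _ _,
      hbc.trans (List.prefix_append _ _)⟩

theorem Icount_mono {ρ τ : List ℕ} (h : ρ <+: τ) : Icount Γ ρ ≤ Icount Γ τ :=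
  Finset.card_le_card (Finset.monotone_filter_right _ fun _ _ hτ => ⟨hτ.1, hτ.2.trans h⟩)

theorem Icount_append_singleton {τ : List ℕ} {i : ℕ} (hτi : τ ++ [i] ∈ Γ.nodes) :
    Icount Γ (τ ++ [i]) = Icount Γ τ + (Γ.lab (τ ++ [i])).toNat := by
  have hsplit : Γ.nodes.filter (fun ρ => Γ.lab ρ = true ∧ ρ <+: τ ++ [i]) =
      Γ.nodes.filter (fun ρ => Γ.lab ρ = true ∧ ρ <+: τ) ∪
        Γ.nodes.filter (fun ρ => Γ.lab ρ = true ∧ ρ = τ ++ [i]) := by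
    rw [← Finset.filter_or]
    refine Finset.filter_congr fun ρ _ => ?_
    rw [List.prefix_concat_iff]
    tauto
  have hdisj : Disjoint (Γ.nodes.filter (fun ρ => Γ.lab ρ = true ∧ ρ <+: τ))
      (Γ.nodes.filter (fun ρ => Γ.lab ρ = true ∧ ρ = τ ++ [i])) := by
    refine Finset.disjoint_filter.2 fun ρ _ h1 h2 => ?_
    have := h1.2.length_le
    simp [h2.2] at this
  have hlast : Γ.nodes.filter (fun ρ => Γ.lab ρ = true ∧ ρ = τ ++ [i]) =
      ({τ ++ [i]} : Finset (List ℕ)).filter (fun ρ => Γ.lab ρ = true) := by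
    ext ρ
    simp only [Finset.mem_filter, Finset.mem_singleton]
    constructor
    · rintro ⟨-, hl, rfl⟩; exact ⟨rfl, hl⟩
    · rintro ⟨rfl, hl⟩; exact ⟨hτi, hl, rfl⟩
  rw [Icount, Icount, hsplit, Finset.card_union_of_disjoint hdisj, hlast, Finset.filter_singleton]
  cases Γ.lab (τ ++ [i]) <;> simp

theorem Icount_nil (hΓ : IsTreePlan Γ) : Icount Γ [] = 0 := by
  simp only [Icount, List.prefix_nil, Finset.card_eq_zero, Finset.filter_eq_empty_iff]
  rintro _ _ ⟨hlab, rfl⟩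
  simp [hΓ.2.2] at hlab

theorem encard_fiberAbove (hΓ : IsTreePlan Γ) {X : Set S} {b : List (ℕ × Option S)}
    (hb : b ∈ GammaSet Γ X) {τ : List ℕ} (hτ : τ ∈ Γ.nodes) (hbτ : piX b <+: τ) :
    (fiberAbove Γ X b τ).encard = X.encard ^ (Icount Γ τ - Icount Γ (piX b)) := by
  induction τ using List.reverseRecOn with
  | nil => rw [← List.prefix_nil.1 hbτ, fiberAbove_piX_self hb]; simp
  | append_singleton τ i ih =>
    rcases List.prefix_concat_iff.1 hbτ with hbτ | hbτ
    · rw [← hbτ, fiberAbove_piX_self hb]; simp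
    have hτ' := hΓ.mem_of_prefix hτ (List.prefix_append _ _)
    have hinj : Function.Injective fun q : List (ℕ × Option S) × Option S => q.1 ++ [(i, q.2)] :=
      fun q q' h => by
        obtain ⟨h1, h2⟩ := List.append_inj' h rfl
        exact Prod.ext h1 (by simpa using h2)
    rw [fiberAbove_append_singleton hΓ hτ (by simpa [length_piX] using hbτ.length_le),
      hinj.encard_image, Set.encard_prod, ih hτ' hbτ, encard_slot, Icount_append_singleton hτ,
      ← pow_add]
    have := Icount_mono (Γ := Γ) hbτ
    congr 1
    omega

theorem nil_mem_GammaSet (hΓ : IsTreePlan Γ) (X : Set S) : [] ∈ GammaSet Γ X :=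
  mem_GammaSet_iff.2 ⟨hΓ.1, fun c p h => by simpa using h.length_le⟩

theorem GammaSet_eq_biUnion_fiberAbove (X : Set S) :
    GammaSet Γ X = ⋃ τ ∈ (Γ.nodes : Set (List ℕ)), fiberAbove Γ X [] τ := by
  ext a
  simp only [Set.mem_iUnion, fiberAbove, Set.mem_ofPred_eq, List.nil_prefix, and_true,
    Finset.mem_coe, exists_prop]
  exact ⟨fun ha => ⟨piX a, ha.1, ha, rfl⟩, fun ⟨_, _, ha, _⟩ => ha⟩

theorem encard_GammaSet (hΓ : IsTreePlan Γ) (X : Set S) :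
    (GammaSet Γ X).encard = ∑ τ ∈ Γ.nodes, X.encard ^ Icount Γ τ := by
  have hdisj : (Γ.nodes : Set (List ℕ)).PairwiseDisjoint (fiberAbove Γ X []) :=
    fun τ _ τ' _ hne => Set.disjoint_left.2 fun a ha ha' => hne (ha.2.1.symm.trans ha'.2.1)
  rw [GammaSet_eq_biUnion_fiberAbove, (Finset.finite_toSet _).encard_biUnion hdisj,
    finsum_mem_coe_finset]
  refine Finset.sum_congr rfl fun τ hτ => ?_
  rw [encard_fiberAbove hΓ (nil_mem_GammaSet hΓ X) hτ List.nil_prefix]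
  simp [piX, Icount_nil hΓ]

theorem ncard_fiberAbove (hΓ : IsTreePlan Γ) {X : Finset S} {b : List (ℕ × Option S)}
    (hb : b ∈ GammaSet Γ (X : Set S)) {τ : List ℕ} (hτ : τ ∈ Γ.nodes) (hbτ : piX b <+: τ) :
    (fiberAbove Γ X b τ).ncard = X.card ^ (Icount Γ τ - Icount Γ (piX b)) := by
  rw [Set.ncard_def, encard_fiberAbove hΓ hb hτ hbτ, Set.encard_coe_eq_coe_finsetCard]
  norm_cast

theorem ncard_GammaSet (hΓ : IsTreePlan Γ) (X : Finset S) :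
    (GammaSet Γ (X : Set S)).ncard = ∑ τ ∈ Γ.nodes, X.card ^ Icount Γ τ := by
  rw [Set.ncard_def, encard_GammaSet hΓ, Set.encard_coe_eq_coe_finsetCard]
  norm_cast

end TreeOfSequences

theorem tendsto_sum_pow_div_pow_sup {ι : Type*} (s : Finset ι) (e : ι → ℕ) :
    Tendsto (fun x : ℝ => (∑ i ∈ s, x ^ e i) / x ^ s.sup e) atTop
      (𝓝 (s.filter fun i => e i = s.sup e).card) := by
  simp_rw [Finset.sum_div]
  rw [Finset.card_filter, Nat.cast_sum]
  refine tendsto_finsetSum _ fun i hi => ?_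
  rcases (Finset.le_sup (f := e) hi).lt_or_eq with hlt | heq
  · simpa [hlt.ne] using tendsto_pow_div_pow_atTop_zero hlt
  · rw [heq]
    refine tendsto_const_nhds.congr' ?_
    filter_upwards [eventually_gt_atTop 0] with x hx
    simp [div_self (pow_pos hx _).ne']

theorem tendsto_pow_div_rpow_of_tendsto_div_pow {α : Type*} {l : Filter α} {u v : α → ℝ}
    {A : ℝ} {d D : ℕ} (hu : ∀ a, 0 ≤ u a) (hv : ∀ a, 0 ≤ v a) (hA : 0 < A) (hD : D ≠ 0)
    (h : Tendsto (fun a => v a / u a ^ D) l (𝓝 A)) :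
    Tendsto (fun a => u a ^ d / v a ^ ((d : ℝ) / D)) l (𝓝 (A ^ (-((d : ℝ) / D)))) := by
  have hlim := (h.inv₀ hA.ne').rpow_const (p := (d : ℝ) / D) (Or.inr (by positivity))
  rw [Real.rpow_neg hA.le, ← Real.inv_rpow hA.le]
  refine hlim.congr fun a => ?_
  rw [inv_div, Real.div_rpow (pow_nonneg (hu a) _) (hv a), ← Real.rpow_natCast (u a) D,
    ← Real.rpow_mul (hu a), mul_div_cancel₀ _ (Nat.cast_ne_zero.2 hD), Real.rpow_natCast]

theorem Acoef_pos {Γ : TreePlan} (h : Γ.nodes.Nonempty) : 0 < Acoef Γ := by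
  obtain ⟨τ, hτ, hmax⟩ := Finset.exists_mem_eq_sup Γ.nodes h (Icount Γ)
  exact Finset.card_pos.2 ⟨τ, Finset.mem_filter.2 ⟨hτ, hmax.symm⟩⟩

theorem tendsto_ncard_GammaSet_div_pow {S : Type*} [Infinite S] {Γ : TreePlan}
    (hΓ : IsTreePlan Γ) :
    Tendsto (fun X : Finset S => ((GammaSet Γ (X : Set S)).ncard : ℝ) / (X.card : ℝ) ^ degPlan Γ)
      atTop (𝓝 (Acoef Γ)) := by
  have h := (tendsto_sum_pow_div_pow_sup Γ.nodes (Icount Γ)).comp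
    (tendsto_natCast_atTop_atTop.comp (tendsto_card_atTop_atTop (α := S)))
  convert h using 2 with X
  · simp [ncard_GammaSet hΓ, degPlan]
  · simp only [Acoef, degPlan]
    congr

open Filter in
theorem fiber_ratio_tendsto_general (Γ : TreePlan) (hΓ : IsTreePlan Γ)
    (σ σ' : List ℕ) (hσ' : σ' ∈ Γ.nodes) (hpre : σ <+: σ')
    (hdeg : Icount Γ σ < Icount Γ σ')
    (X₀ : Finset ℕ) (b : List (ℕ × Option ℕ))
    (hb : b ∈ GammaSet Γ (↑X₀ : Set ℕ)) (hπb : piX b = σ) :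
    Tendsto
      (fun X : Finset ℕ =>
        (Nat.card {a : List (ℕ × Option ℕ) //
            a ∈ GammaSet Γ (↑X : Set ℕ) ∧ piX a = σ' ∧ b <+: a ∧ b ≠ a} : ℝ) /
          (Nat.card (GammaSet Γ (↑X : Set ℕ)) : ℝ) ^
            (((Icount Γ σ' - Icount Γ σ : ℕ) : ℝ) / (degPlan Γ : ℝ)))
      atTop
      (nhds ((Acoef Γ : ℝ) ^
        (-(((Icount Γ σ' - Icount Γ σ : ℕ) : ℝ) / (degPlan Γ : ℝ))))) := by
  have hσσ' : σ ≠ σ' := by rintro rfl; exact lt_irrefl _ hdeg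
  have hD : degPlan Γ ≠ 0 := by
    have hσ'D : Icount Γ σ' ≤ degPlan Γ := Finset.le_sup hσ'
    omega
  have hA : (0 : ℝ) < Acoef Γ := by exact_mod_cast Acoef_pos ⟨σ', hσ'⟩
  refine (tendsto_pow_div_rpow_of_tendsto_div_pow (fun _ => Nat.cast_nonneg _)
    (fun _ => Nat.cast_nonneg _) hA hD (tendsto_ncard_GammaSet_div_pow hΓ)).congr' ?_
  filter_upwards [eventually_ge_atTop X₀] with X hX
  have hbX : b ∈ GammaSet Γ (X : Set ℕ) := GammaSet_mono (Finset.coe_subset.2 hX) hb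
  have hfiber : {a | a ∈ GammaSet Γ (X : Set ℕ) ∧ piX a = σ' ∧ b <+: a ∧ b ≠ a} =
      fiberAbove Γ X b σ' := by
    ext a
    refine ⟨fun ⟨ha, hπ, hba, _⟩ => ⟨ha, hπ, hba⟩, fun ⟨ha, hπ, hba⟩ => ⟨ha, hπ, hba, ?_⟩⟩
    rintro rfl
    exact hσσ' (hπb.symm.trans hπ)
  have hnum : Nat.card {a // a ∈ GammaSet Γ (X : Set ℕ) ∧ piX a = σ' ∧ b <+: a ∧ b ≠ a} =
      X.card ^ (Icount Γ σ' - Icount Γ σ) := by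
    rw [← hπb, ← ncard_fiberAbove hΓ hbX hσ' (hπb ▸ hpre), ← hfiber]
    rfl
  rw [hnum, Nat.card_coe_set_eq]
  push_cast
  rfl

open Filter in
/-- Let `Γ` be a tree plan, `σ ⊆ σ'` nodes with `deg(σ'/σ) = I(Γ,σ') − I(Γ,σ) > 0`,
and `δ = deg(σ'/σ)/deg(Γ)`.  For any fixed `b` with `π(b) = σ` (living in `Γ(X₀)`
for some finite `X₀ ⊆ ℕ`), along finite sets `X` with `|X| → ∞` the ratio
`|{a ∈ Γ(X) : π(a) = σ', b < a}| / |Γ(X)|^δ` converges to `A(Γ)^{-δ}`,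
where `A(Γ)` is the number of nodes of `Γ` of maximal degree. -/
theorem fiber_ratio_tendsto (Γ : TreePlan) (hΓ : IsTreePlan Γ)
    (σ σ' : List ℕ) (hσ : σ ∈ Γ.nodes) (hσ' : σ' ∈ Γ.nodes) (hpre : σ <+: σ')
    (hdeg : Icount Γ σ < Icount Γ σ')
    (X₀ : Finset ℕ) (b : List (ℕ × Option ℕ))
    (hb : b ∈ GammaSet Γ (↑X₀ : Set ℕ)) (hπb : piX b = σ) :
    Tendsto
      (fun X : Finset ℕ =>
        (Nat.card {a : List (ℕ × Option ℕ) //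
            a ∈ GammaSet Γ (↑X : Set ℕ) ∧ piX a = σ' ∧ b <+: a ∧ b ≠ a} : ℝ) /
          (Nat.card (GammaSet Γ (↑X : Set ℕ)) : ℝ) ^
            (((Icount Γ σ' - Icount Γ σ : ℕ) : ℝ) / (degPlan Γ : ℝ)))
      atTop
      (nhds ((Acoef Γ : ℝ) ^
        (-(((Icount Γ σ' - Icount Γ σ : ℕ) : ℝ) / (degPlan Γ : ℝ))))) :=
  fiber_ratio_tendsto_general Γ hΓ σ σ' hσ' hpre hdeg X₀ b hb hπb
end

section
/- Every countable ℵ₀-categorical tree (in the language with ≤, root ε, meet, and pred) has finite height: there exists n such that pred^n(x) = ε for all x. -/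
open FirstOrder FirstOrder.Language Cardinal

/-- The language of trees `L_t`: a constant `ε`, a unary function `pred`,
a binary function `⊓`, and a binary relation `≤`. -/
def treeLang : FirstOrder.Language where
  Functions := fun n => match n with
    | 0 => Unit
    | 1 => Unit
    | 2 => Unit
    | _ => Empty
  Relations := fun n => match n with
    | 2 => Unit
    | _ => Empty

/-- The `L_t`-structure on a tree given by root, predecessor, meet and order. -/
def treeStructure (A : Type*) (ε : A) (pred : A → A) (meet : A → A → A)
    (le : A → A → Prop) : treeLang.Structure A where
  funMap := fun {n} f x =>
    match n, f with
    | 0, _ => ε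
    | 1, _ => pred (x 0)
    | 2, _ => meet (x 0) (x 1)
    | _ + 3, f => f.elim
  RelMap := fun {n} r x =>
    match n, r with
    | 0, r => r.elim
    | 1, r => r.elim
    | 2, _ => le (x 0) (x 1)
    | _ + 3, r => r.elim

/-!
If the heights were unbounded, the type `{pred^n x ≠ ε | n ∈ ℕ}` would be finitely realized in
`A`. By compactness and downward Löwenheim–Skolem it is then realized in a countable model of the
complete theory of `A`, which `ℵ₀`-categoricity makes isomorphic to `A`. So some `x : A` has
`pred^n x ≠ ε` for all `n`, and `x > pred x > pred² x > ⋯` contradicts the finiteness of the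
downset of `x`.
-/

namespace Function

variable {α : Type*} {f : α → α} {a : α}

theorem IsFixedPt.iterate_eq_of_le (ha : IsFixedPt f a) {x : α} {m n : ℕ} (hmn : m ≤ n)
    (hx : f^[m] x = a) : f^[n] x = a := by
  obtain ⟨k, rfl⟩ := Nat.exists_eq_add_of_le hmn
  rw [add_comm, iterate_add_apply, hx, iterate_fixed ha]

theorem IsFixedPt.exists_forall_iterate_eq [Finite α] (ha : IsFixedPt f a)
    (h : ∀ x, ∃ n, f^[n] x = a) : ∃ n, ∀ x, f^[n] x = a := by
  choose height hheight using h
  obtain ⟨n, hn⟩ := Finite.exists_le height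
  exact ⟨n, fun x => ha.iterate_eq_of_le (hn x) (hheight x)⟩

theorem exists_iterate_eq_of_finite_Iic [PartialOrder α] (hf : ∀ x, x ≠ a → f x < x)
    (hfin : ∀ b : α, (Set.Iic b).Finite) (x : α) : ∃ n, f^[n] x = a := by
  by_contra! h
  have hanti : StrictAnti fun n => f^[n] x :=
    strictAnti_nat_of_succ_lt fun n => by rw [iterate_succ_apply']; exact hf _ (h n)
  exact Set.infinite_of_injective_forall_mem (s := Set.Iic x) hanti.injective
    (fun n => hanti.antitone n.zero_le) (hfin x)

end Function

namespace FirstOrder.Language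

universe u v w w'

def FinitelyRealized {L : Language} (M : Type*) [L.Structure M] {α : Type*}
    (p : Set (L.Formula α)) : Prop :=
  ∀ s ⊆ p, s.Finite → ∃ v : α → M, ∀ φ ∈ s, φ.Realize v

variable {L : Language.{u, v}} {M : Type w} [L.Structure M] {α : Type*}

theorem Term.realize_iterate_apply₁ (f : L.Functions 1) (t : L.Term α) (v : α → M) (n : ℕ) :
    (f.apply₁^[n] t).realize v = (fun x => Structure.funMap f ![x])^[n] (t.realize v) := by
  induction n with
  | zero => rfl
  | succ n ih =>
    rw [Function.iterate_succ_apply', Function.iterate_succ_apply', ← ih,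
      Term.realize_functions_apply₁]

theorem finitelyRealized_range {φ : ℕ → L.Formula α}
    (hφ : Antitone fun n => {v : α → M | (φ n).Realize v})
    (h : ∀ n, ∃ v : α → M, (φ n).Realize v) : FinitelyRealized M (Set.range φ) := by
  intro s hs hfin
  obtain ⟨t, -, ht, rfl⟩ :=
    Set.exists_subset_image_finite_and.1 ⟨s, Set.image_univ ▸ hs, hfin, rfl⟩
  obtain ⟨N, hN⟩ := ht.bddAbove
  obtain ⟨v, hv⟩ := h N
  exact ⟨v, Set.forall_mem_image.2 fun n hn => hφ (hN hn) hv⟩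

theorem infinite_of_model_completeTheory [Infinite M] (N : Type*) [L.Structure N]
    [hN : N ⊨ L.completeTheory M] : Infinite N :=
  (model_infiniteTheory_iff L).1 (hN.mono Theory.completeTheory.subset)

theorem card_withConstants_le_aleph0 [Countable L.Symbols] [Countable α] :
    L[[α]].card ≤ ℵ₀ := by
  rw [card_withConstants]
  exact add_le_aleph0.2 ⟨lift_le_aleph0.2 mk_le_aleph0, lift_le_aleph0.2 mk_le_aleph0⟩

theorem FinitelyRealized.isSatisfiable_union_completeTheory [Nonempty M]
    {p : Set (L.Formula α)} (hp : FinitelyRealized M p) :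
    ((L.lhomWithConstants α).onTheory (L.completeTheory M) ∪
      Formula.equivSentence '' p).IsSatisfiable := by
  refine Theory.isSatisfiable_iff_isFinitelySatisfiable.2 fun T₀ hT₀ => ?_
  set s := p ∩ Formula.equivSentence ⁻¹' T₀
  obtain ⟨v, hv⟩ := hp s Set.inter_subset_left
    ((T₀.finite_toSet.preimage Formula.equivSentence.injective.injOn).inter_of_right p)
  let : (constantsOn α).Structure M := constantsOn.structure v
  have hM : M ⊨ (L.lhomWithConstants α).onTheory (L.completeTheory M) ∪
      Formula.equivSentence '' s :=
    ((LHom.onTheory_model _ _).2 inferInstance).union <| Theory.model_iff _ |>.2 <| by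
      rintro _ ⟨φ, hφ, rfl⟩
      exact (Formula.realize_equivSentence M φ).2 (hv φ hφ)
  refine (hM.isSatisfiable M).mono fun ψ hψ => ?_
  rcases hT₀ hψ with hψ' | ⟨φ, hφ, rfl⟩
  · exact Or.inl hψ'
  · exact Or.inr ⟨φ, ⟨hφ, hψ⟩, rfl⟩

theorem FinitelyRealized.exists_countable_model_realize [Countable L.Symbols] [Countable α]
    [Infinite M] {p : Set (L.Formula α)} (hp : FinitelyRealized M p) :
    ∃ N : Theory.ModelType.{u, v, w'} (L.completeTheory M),
      #N = ℵ₀ ∧ ∃ v : α → N, ∀ φ ∈ p, φ.Realize v := by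
  set T' := (L.lhomWithConstants α).onTheory (L.completeTheory M) ∪ Formula.equivSentence '' p
  obtain ⟨N₀⟩ := hp.isSatisfiable_union_completeTheory
  have : Infinite N₀ := infinite_of_model_completeTheory (L := L) (M := M)
    (Theory.ModelType.reduct _ (N₀.subtheoryModel Set.subset_union_left))
  obtain ⟨N, hN⟩ := Theory.exists_model_card_eq ⟨N₀, this⟩ ℵ₀ le_rfl
    (by simpa using card_withConstants_le_aleph0 (L := L) (α := α))
  refine ⟨.reduct _ (N.subtheoryModel Set.subset_union_left), hN, fun a => (L.con a : N),
    fun φ hφ => ?_⟩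
  let : L.Structure N := (L.lhomWithConstants α).reduct N
  have := LHom.isExpansionOn_reduct (L.lhomWithConstants α) N
  exact (Formula.realize_equivSentence N φ).1
    (Theory.realize_sentence_of_mem T' (Or.inr ⟨φ, hφ, rfl⟩))

theorem _root_.Cardinal.Categorical.exists_realize_of_finitelyRealized [Countable L.Symbols]
    [Countable α] [Countable M] [Infinite M]
    (hcat : (ℵ₀ : Cardinal.{w'}).Categorical (L.completeTheory M))
    {p : Set (L.Formula α)} (hp : FinitelyRealized M p) :
    ∃ v : α → M, ∀ φ ∈ p, φ.Realize v := by
  obtain ⟨N, hN, v, hv⟩ := hp.exists_countable_model_realize.{u, v, w, w'}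
  -- `hcat` only compares models living in universe `w'`, so `M` is first copied there.
  obtain ⟨e⟩ : Nonempty (M ≃ ULift.{w'} ℕ) := by
    rw [← Cardinal.lift_mk_eq', Cardinal.mk_eq_aleph0 M]
    simp
  obtain ⟨g⟩ := hcat ((Theory.ModelType.of _ M).equivInduced e) N
    (show #(ULift.{w'} ℕ) = ℵ₀ by simp) hN
  let f : M ≃[L] N := g.comp e.inducedStructureEquiv
  exact ⟨f.symm ∘ v, fun φ hφ => (StrongHomClass.realize_formula f.symm φ).2 (hv φ hφ)⟩

end FirstOrder.Language

namespace treeLang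

instance (n : ℕ) : Countable (treeLang.Functions n) :=
  match n with
  | 0 | 1 | 2 => inferInstanceAs (Countable Unit)
  | _ + 3 => inferInstanceAs (Countable Empty)

instance (n : ℕ) : Countable (treeLang.Relations n) :=
  match n with
  | 2 => inferInstanceAs (Countable Unit)
  | 0 | 1 | _ + 3 => inferInstanceAs (Countable Empty)

instance : Countable treeLang.Symbols := by
  unfold Language.Symbols
  infer_instance

def predSymbol : treeLang.Functions 1 := ()

def rootSymbol : treeLang.Constants := ()

def heightGt (n : ℕ) : treeLang.Formula Unit :=
  ∼(Term.equal (predSymbol.apply₁^[n] (var ())) rootSymbol.term)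

variable {A : Type*} {ε : A} {pred : A → A} {meet : A → A → A} {le : A → A → Prop}

theorem realize_heightGt (n : ℕ) (v : Unit → A) :
    @Formula.Realize _ _ (treeStructure A ε pred meet le) _ (heightGt n) v ↔
      pred^[n] (v ()) ≠ ε := by
  let := treeStructure A ε pred meet le
  rw [heightGt, Formula.realize_not, Formula.realize_equal, Term.realize_iterate_apply₁]
  rfl

theorem antitone_realize_heightGt (hroot : pred ε = ε) :
    Antitone fun n => {v : Unit → A |
      @Formula.Realize _ _ (treeStructure A ε pred meet le) _ (heightGt n) v} :=
  fun m n hmn v hv => (realize_heightGt m v).2 <|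
    mt (Function.IsFixedPt.iterate_eq_of_le hroot hmn) ((realize_heightGt n v).1 hv)

end treeLang

theorem aleph0_categorical_tree_finite_height_general
    (A : Type*) [Countable A] (le : A → A → Prop) (ε : A)
    (pred : A → A) (meet : A → A → A)
    (hrefl : ∀ a, le a a)
    (hantisymm : ∀ a b, le a b → le b a → a = b)
    (htrans : ∀ a b c, le a b → le b c → le a c)
    (hfin : ∀ b : A, {a : A | le a b}.Finite)
    (hpred : ∀ a : A, a ≠ ε → le (pred a) a ∧ pred a ≠ a ∧
      ∀ c, le c a → c ≠ a → le c (pred a))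
    (hpredroot : pred ε = ε)
    (hcat : Cardinal.Categorical ℵ₀
      (@FirstOrder.Language.completeTheory treeLang A (treeStructure A ε pred meet le))) :
    ∃ n : ℕ, ∀ x : A, pred^[n] x = ε := by
  let _ : PartialOrder A :=
    { le, le_refl := hrefl, le_trans := htrans, le_antisymm := hantisymm }
  have hheight : ∀ x, ∃ n, pred^[n] x = ε := Function.exists_iterate_eq_of_finite_Iic
    (fun a ha => lt_of_le_of_ne (hpred a ha).1 (hpred a ha).2.1) hfin
  rcases finite_or_infinite A with _ | _
  · exact Function.IsFixedPt.exists_forall_iterate_eq hpredroot hheight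
  by_contra! hunbounded
  let := treeStructure A ε pred meet le
  obtain ⟨v, hv⟩ := hcat.exists_realize_of_finitelyRealized <|
    finitelyRealized_range (treeLang.antitone_realize_heightGt hpredroot) fun n =>
      let ⟨x, hx⟩ := hunbounded n
      ⟨fun _ => x, (treeLang.realize_heightGt n _).2 hx⟩
  obtain ⟨n, hn⟩ := hheight (v ())
  exact (treeLang.realize_heightGt n v).1 (hv _ ⟨n, rfl⟩) hn

/-- Every countable `ℵ₀`-categorical tree (an `L_t`-structure where `≤` is a
partial order with finite downsets, `ε` is the minimum, `⊓` is the meet and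
`pred` the immediate predecessor) has finite height: there is `n` with
`pred^[n] x = ε` for all `x`. -/
theorem aleph0_categorical_tree_finite_height
    (A : Type*) [Countable A] (le : A → A → Prop) (ε : A)
    (pred : A → A) (meet : A → A → A)
    (hrefl : ∀ a, le a a)
    (hantisymm : ∀ a b, le a b → le b a → a = b)
    (htrans : ∀ a b c, le a b → le b c → le a c)
    (hmin : ∀ a, le ε a)
    (hfin : ∀ b : A, {a : A | le a b}.Finite)
    (hmeet : ∀ a b : A, le (meet a b) a ∧ le (meet a b) b ∧
      ∀ c, le c a → le c b → le c (meet a b))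
    (hpred : ∀ a : A, a ≠ ε → le (pred a) a ∧ pred a ≠ a ∧
      ∀ c, le c a → c ≠ a → le c (pred a))
    (hpredroot : pred ε = ε)
    (hcat : Cardinal.Categorical ℵ₀
      (@FirstOrder.Language.completeTheory treeLang A (treeStructure A ε pred meet le))) :
    ∃ n : ℕ, ∀ x : A, pred^[n] x = ε :=
  aleph0_categorical_tree_finite_height_general A le ε pred meet hrefl hantisymm htrans hfin hpred
    hpredroot hcat
end
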